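/- For every integer n ≥ 0, the identity of real polynomials ((2n+2)x² − 3x − (2n+1))U_{2n+1}(x) + (x+1)(U_{2n}(x) + 1) = (x−1)·U_n(x)·S_{2n+1}(x) holds; that is, φ_{2n+1}(x) = (x−1)·U^e_{2n+1}(x)·S_{2n+1}(x). -/
import Mathlib

open Polynomial Polynomial.Chebyshev

lemma U_pell (n : ℤ) :
    U ℝ n ^ 2 - 2 * X * U ℝ n * U ℝ (n - 1) + U ℝ (n - 1) ^ 2 = 1 := by
  induction n using Polynomial.Chebyshev.induct with
  | zero => simp [U_zero, U_neg_one]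
  | one => norm_num [U_one, U_zero]; ring
  | add_two k ih1 ih2 =>
    have h := U_add_two ℝ (k : ℤ)
    rw [show ((k : ℤ) + 1) - 1 = (k : ℤ) from by ring] at ih1
    rw [show ((k : ℤ) + 2) - 1 = (k : ℤ) + 1 from by ring]
    linear_combination ih1 + (U ℝ ((k : ℤ) + 2) - U ℝ (k : ℤ)) * h
  | neg_add_one k ih1 ih2 =>
    have h := U_sub_two ℝ (-(k : ℤ))
    rw [show (-(k : ℤ) - 1) - 1 = -(k : ℤ) - 2 from by ring]
    linear_combination ih1 + (U ℝ (-(k : ℤ) - 2) - U ℝ (-(k : ℤ))) * h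

lemma U_double (n : ℤ) :
    U ℝ (2 * n) = U ℝ n ^ 2 - U ℝ (n - 1) ^ 2 ∧
    U ℝ (2 * n + 1) = 2 * U ℝ n * (X * U ℝ n - U ℝ (n - 1)) := by
  induction n using Polynomial.Chebyshev.induct with
  | zero => norm_num [U_zero, U_one, U_neg_one]
  | one =>
    have h3 := U_add_two ℝ 1
    norm_num [U_zero, U_one, U_two] at h3 ⊢
    exact ⟨by ring, by rw [h3]; ring⟩
  | add_two k ih1 ih2 =>
    obtain ⟨he, ho⟩ := ih1
    rw [show ((k : ℤ) + 1) - 1 = (k : ℤ) from by ring] at he ho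
    rw [show 2 * ((k : ℤ) + 1) = 2 * (k : ℤ) + 2 from by ring] at he
    rw [show 2 * ((k : ℤ) + 1) + 1 = 2 * (k : ℤ) + 3 from by ring] at ho
    have r1 := U_add_two ℝ (k : ℤ)
    have r2 := U_add_two ℝ (2 * (k : ℤ) + 2)
    have r3 := U_add_two ℝ (2 * (k : ℤ) + 3)
    rw [show (2 * (k : ℤ) + 2) + 2 = 2 * ((k : ℤ) + 2) from by ring,
        show (2 * (k : ℤ) + 2) + 1 = 2 * (k : ℤ) + 3 from by ring] at r2
    rw [show (2 * (k : ℤ) + 3) + 2 = 2 * ((k : ℤ) + 2) + 1 from by ring,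
        show (2 * (k : ℤ) + 3) + 1 = 2 * ((k : ℤ) + 2) from by ring] at r3
    rw [show ((k : ℤ) + 2) - 1 = (k : ℤ) + 1 from by ring]
    have heven : U ℝ (2 * ((k : ℤ) + 2)) = U ℝ ((k : ℤ) + 2) ^ 2 - U ℝ ((k : ℤ) + 1) ^ 2 := by
      rw [r2, ho, he]
      linear_combination (-(U ℝ ((k : ℤ) + 2) + 2 * (X : ℝ[X]) * U ℝ ((k : ℤ) + 1)
        - U ℝ (k : ℤ))) * r1
    refine ⟨heven, ?_⟩
    rw [r3, heven, ho]
    linear_combination (2 * U ℝ ((k : ℤ) + 1)) * r1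
  | neg_add_one k ih1 ih2 =>
    obtain ⟨he, ho⟩ := ih1
    rw [show 2 * (-(k : ℤ)) = -(2 * (k : ℤ)) from by ring] at he
    rw [show 2 * (-(k : ℤ)) + 1 = -(2 * (k : ℤ)) + 1 from by ring] at ho
    have s1 := U_sub_one ℝ (-(2 * (k : ℤ)))
    have s2 := U_sub_two ℝ (-(2 * (k : ℤ)))
    have s3 := U_sub_two ℝ (-(k : ℤ))
    rw [show (-(2 * (k : ℤ))) - 2 = 2 * (-(k : ℤ) - 1) from by ring,
        show (-(2 * (k : ℤ))) - 1 = 2 * (-(k : ℤ) - 1) + 1 from by ring] at s2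
    rw [show (-(2 * (k : ℤ))) - 1 = 2 * (-(k : ℤ) - 1) + 1 from by ring] at s1
    rw [show (-(k : ℤ) - 1) - 1 = -(k : ℤ) - 2 from by ring]
    have hodd : U ℝ (2 * (-(k : ℤ) - 1) + 1)
        = 2 * U ℝ (-(k : ℤ) - 1) * (X * U ℝ (-(k : ℤ) - 1) - U ℝ (-(k : ℤ) - 2)) := by
      rw [s1, he, ho]
      linear_combination (2 * U ℝ (-(k : ℤ) - 1)) * s3
    refine ⟨?_, hodd⟩
    rw [s2, hodd, he]
    linear_combination (U ℝ (-(k : ℤ) - 2) - 2 * (X : ℝ[X]) * U ℝ (-(k : ℤ) - 1)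
      - U ℝ (-(k : ℤ))) * s3

/-- `S_{2n+1}(x) = 2(2nx² + 2x² + 2nx − x − 1)Uₙ(x) − 2(2nx + 3x + 2n + 1)U_{n-1}(x)`. -/
noncomputable def S2n1 (n : ℕ) : Polynomial ℝ :=
  Polynomial.C (2 : ℝ) *
      (Polynomial.C (2 * (n : ℝ) + 2) * Polynomial.X ^ 2 +
        Polynomial.C (2 * (n : ℝ) - 1) * Polynomial.X - 1) * U ℝ (n : ℤ) -
    Polynomial.C (2 : ℝ) *
      (Polynomial.C (2 * (n : ℝ) + 3) * Polynomial.X + Polynomial.C (2 * (n : ℝ) + 1)) *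
      U ℝ ((n : ℤ) - 1)

/-- For every `n ≥ 0`,
`φ_{2n+1}(x) = ((2n+2)x² − 3x − (2n+1))U_{2n+1}(x) + (x+1)(U_{2n}(x) + 1)
             = (x−1)·Uₙ(x)·S_{2n+1}(x)`,
i.e. `φ_{2n+1} = (x−1)·U^e_{2n+1}·S_{2n+1}` as real polynomials. -/
theorem phi_odd_factorization (n : ℕ) :
    (Polynomial.C (2 * (n : ℝ) + 2) * Polynomial.X ^ 2 - Polynomial.C (3 : ℝ) * Polynomial.X -
        Polynomial.C (2 * (n : ℝ) + 1)) * U ℝ (2 * (n : ℤ) + 1) +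
      (Polynomial.X + 1) * (U ℝ (2 * (n : ℤ)) + 1) =
    (Polynomial.X - 1) * U ℝ (n : ℤ) * S2n1 n := by
  obtain ⟨he, ho⟩ := U_double (n : ℤ)
  rw [S2n1, he, ho]
  simp only [map_add, map_sub, map_mul, map_one, map_ofNat, Polynomial.C_eq_natCast]
  linear_combination (-(X + 1) : ℝ[X]) * U_pell (n : ℤ)
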